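/- Let G be an affine group scheme of finite type over a field k and X ⊆ O(G) a subspace containing 1. Define O(G)_X to be the largest X-subcomodule of O(G) with its right regular comodule structure. Then O(G)_X is a subcoalgebra of O(G), and O(G)_X ⊆ X; in particular O(G)_X is finite dimensional whenever X is finite dimensional. -/

import Mathlib

open TensorProduct

/-- The coaction `ρ : M → M ⊗ C` factors through `M ⊗ X` for a subspace `X ⊆ C`. -/
def CoactsThrough (k : Type*) {C M : Type*} [CommRing k] [AddCommGroup C] [Module k C]
    [AddCommGroup M] [Module k M]
    (ρ : M →ₗ[k] M ⊗[k] C) (X : Submodule k C) : Prop :=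
  ∀ m : M, ρ m ∈ LinearMap.range (LinearMap.lTensor M X.subtype)

/-- `ρ` is a (counital, coassociative) right `C`-comodule structure on `M`. -/
structure IsComodule (k : Type*) {C M : Type*} [CommRing k] [AddCommGroup C] [Module k C]
    [Coalgebra k C] [AddCommGroup M] [Module k M]
    (ρ : M →ₗ[k] M ⊗[k] C) : Prop where
  counit_comp : ∀ m : M,
    (TensorProduct.rid k M) (LinearMap.lTensor M (Coalgebra.counit (R := k) (A := C)) (ρ m)) = m
  coassoc : ∀ m : M,
    (TensorProduct.assoc k M C C) (LinearMap.rTensor C ρ (ρ m)) =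
      LinearMap.lTensor M (Coalgebra.comul (R := k) (A := C)) (ρ m)

/-- `N ⊆ M` is a subcomodule whose coaction factors through `N ⊗ X`. -/
def IsXSubcomodule (k : Type*) {C M : Type*} [CommRing k] [AddCommGroup C] [Module k C]
    [AddCommGroup M] [Module k M]
    (ρ : M →ₗ[k] M ⊗[k] C) (X : Submodule k C) (N : Submodule k M) : Prop :=
  ∀ m ∈ N, ρ m ∈ LinearMap.range (TensorProduct.map N.subtype X.subtype)

/-!
The largest `X`-subcomodule `S` is the greatest fixed point of `N ↦ Δ⁻¹(N ⊗ X)`, hence itself an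
`X`-subcomodule, and applying `ε ⊗ id` to `Δ c ∈ S ⊗ X` gives `S ≤ X`. For `φ ∈ C*` the map
`c ↦ (φ ⊗ id) (Δ c)` commutes with `Δ` by coassociativity, so it carries `X`-subcomodules to
`X`-subcomodules and therefore preserves `S`. Thus for `c ∈ S` every contraction `(φ ⊗ id) (Δ c)`
lies in `S`, which over a field forces `Δ c ∈ S ⊗ S`.
-/

section Contraction

variable {k M N P : Type*} [CommRing k] [AddCommGroup M] [Module k M] [AddCommGroup N]
  [Module k N] [AddCommGroup P] [Module k P]

def leftContract (φ : Module.Dual k M) : M ⊗[k] N →ₗ[k] N :=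
  (TensorProduct.lid k N).toLinearMap ∘ₗ φ.rTensor N

@[simp]
lemma leftContract_tmul (φ : Module.Dual k M) (m : M) (n : N) :
    leftContract φ (m ⊗ₜ[k] n) = φ m • n := by
  simp [leftContract]

lemma leftContract_map {M' N' : Type*} [AddCommGroup M'] [Module k M'] [AddCommGroup N']
    [Module k N'] (φ : Module.Dual k M') (f : M →ₗ[k] M') (g : N →ₗ[k] N') (u : M ⊗[k] N) :
    leftContract φ (TensorProduct.map f g u) = g (leftContract (φ ∘ₗ f) u) := by
  induction u using TensorProduct.induction_on <;> simp_all

lemma leftContract_assoc (φ : Module.Dual k M) (w : (M ⊗[k] N) ⊗[k] P) :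
    leftContract φ (TensorProduct.assoc k M N P w) = (leftContract φ).rTensor P w := by
  induction w using TensorProduct.induction_on with
  | zero => simp
  | tmul u p =>
    induction u using TensorProduct.induction_on with
    | zero => simp
    | tmul m n => simp [smul_tmul']
    | add u₁ u₂ h₁ h₂ => simp_all [add_tmul]
  | add w₁ w₂ h₁ h₂ => simp_all

end Contraction

section FieldContraction

variable {k M N : Type*} [Field k] [AddCommGroup M] [Module k M] [AddCommGroup N] [Module k N]

lemma mem_range_lTensor_of_forall_leftContract_mem {q : Submodule k N} {u : M ⊗[k] N}
    (h : ∀ φ : Module.Dual k M, leftContract φ u ∈ q) :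
    u ∈ LinearMap.range (q.subtype.lTensor M) := by
  classical
  set b := Module.Basis.ofVectorSpace k M
  obtain ⟨c, rfl⟩ := TensorProduct.eq_repr_basis_left b u
  refine Submodule.sum_mem _ fun i _ => ?_
  have hci : leftContract (b.coord i) (c.sum fun j n => b j ⊗ₜ[k] n) = c i := by
    simp [Finsupp.sum, map_sum, Finsupp.single_apply, eq_comm]
  exact ⟨b i ⊗ₜ ⟨c i, hci ▸ h _⟩, rfl⟩

lemma mem_range_map_of_forall_leftContract_mem {p : Submodule k M} {q : Submodule k N}
    {u : M ⊗[k] N} (hu : u ∈ LinearMap.range (p.subtype.rTensor N))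
    (h : ∀ φ : Module.Dual k M, leftContract φ u ∈ q) :
    u ∈ LinearMap.range (TensorProduct.map p.subtype q.subtype) := by
  obtain ⟨v, rfl⟩ := hu
  obtain ⟨w, rfl⟩ : v ∈ LinearMap.range (q.subtype.lTensor p) := by
    refine mem_range_lTensor_of_forall_leftContract_mem fun ψ => ?_
    obtain ⟨φ, rfl⟩ := LinearMap.exists_extend ψ
    simpa [LinearMap.rTensor, leftContract_map] using h φ
  exact ⟨w, by rw [← LinearMap.rTensor_comp_lTensor, LinearMap.comp_apply]⟩

end FieldContraction

section Subcomodule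

variable {k C M : Type*} [CommRing k] [AddCommGroup C] [Module k C] [AddCommGroup M] [Module k M]

lemma range_map_subtype_mono_left {p p' : Submodule k M} (q : Submodule k C) (h : p ≤ p') :
    LinearMap.range (TensorProduct.map p.subtype q.subtype) ≤
      LinearMap.range (TensorProduct.map p'.subtype q.subtype) := by
  rintro _ ⟨v, rfl⟩
  refine ⟨(Submodule.inclusion h).rTensor q v, ?_⟩
  rw [LinearMap.rTensor, ← LinearMap.comp_apply, ← TensorProduct.map_comp,
    Submodule.subtype_comp_inclusion, LinearMap.comp_id]

variable (ρ : M →ₗ[k] M ⊗[k] C) (X : Submodule k C)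

def coactionPreimage : Submodule k M →o Submodule k M where
  toFun N := (LinearMap.range (TensorProduct.map N.subtype X.subtype)).comap ρ
  monotone' _ _ h := Submodule.comap_mono (range_map_subtype_mono_left X h)

lemma sSup_isXSubcomodule_eq_gfp :
    sSup {N | IsXSubcomodule k ρ X N} = (coactionPreimage ρ X).gfp :=
  rfl

lemma isXSubcomodule_sSup : IsXSubcomodule k ρ X (sSup {N | IsXSubcomodule k ρ X N}) := by
  rw [sSup_isXSubcomodule_eq_gfp]
  exact (OrderHom.map_gfp (coactionPreimage ρ X)).ge

variable {ρ X}

lemma IsXSubcomodule.map {f : M →ₗ[k] M} (hf : ρ ∘ₗ f = f.rTensor C ∘ₗ ρ) {N : Submodule k M}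
    (hN : IsXSubcomodule k ρ X N) : IsXSubcomodule k ρ X (N.map f) := by
  rintro _ ⟨n, hn, rfl⟩
  obtain ⟨v, hv⟩ := hN n hn
  refine ⟨(f.submoduleMap N).rTensor X v, ?_⟩
  rw [← LinearMap.comp_apply ρ f, hf, LinearMap.comp_apply, ← hv, LinearMap.rTensor,
    ← LinearMap.comp_apply, ← TensorProduct.map_comp, ← LinearMap.comp_apply, LinearMap.rTensor,
    ← TensorProduct.map_comp]
  rfl

end Subcomodule

section Coalgebra

variable {k C : Type*} [CommRing k] [AddCommGroup C] [Module k C] [Coalgebra k C]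

lemma comul_comp_leftContract_comul (φ : Module.Dual k C) :
    Coalgebra.comul ∘ₗ (leftContract φ ∘ₗ Coalgebra.comul) =
      (leftContract φ ∘ₗ Coalgebra.comul).rTensor C ∘ₗ (Coalgebra.comul (R := k) (A := C)) := by
  ext c
  have hcomul : Coalgebra.comul (R := k) ∘ₗ leftContract φ =
      leftContract φ ∘ₗ (Coalgebra.comul (R := k) (A := C)).lTensor C := by
    ext x y; simp
  simp only [LinearMap.comp_apply, ← LinearMap.comp_apply (Coalgebra.comul (R := k)), hcomul,
    ← Coalgebra.coassoc_apply, leftContract_assoc, LinearMap.rTensor_comp]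

lemma IsXSubcomodule.le {X N : Submodule k C}
    (hN : IsXSubcomodule k (Coalgebra.comul (R := k) (A := C)) X N) : N ≤ X := by
  intro c hc
  obtain ⟨v, hv⟩ := hN c hc
  have hcounit : leftContract Coalgebra.counit (Coalgebra.comul (R := k) c) = c := by
    simp [leftContract, Coalgebra.rTensor_counit_comul]
  rw [← hcounit, ← hv, leftContract_map]
  exact Submodule.coe_mem _

end Coalgebra

theorem OGX_subcoalgebra_general {k C : Type*} [Field k] [CommRing C]
    [HopfAlgebra k C] (X : Submodule k C) :
    (∀ c ∈ sSup {N : Submodule k C |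
        IsXSubcomodule k (Coalgebra.comul (R := k) (A := C)) X N},
      Coalgebra.comul (R := k) c ∈ LinearMap.range (TensorProduct.map
        (sSup {N : Submodule k C |
          IsXSubcomodule k (Coalgebra.comul (R := k) (A := C)) X N}).subtype
        (sSup {N : Submodule k C |
          IsXSubcomodule k (Coalgebra.comul (R := k) (A := C)) X N}).subtype)) ∧
    sSup {N : Submodule k C |
      IsXSubcomodule k (Coalgebra.comul (R := k) (A := C)) X N} ≤ X ∧
    (FiniteDimensional k ↥X → FiniteDimensional k ↥(sSup {N : Submodule k C |
      IsXSubcomodule k (Coalgebra.comul (R := k) (A := C)) X N})) := by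
  set S := sSup {N : Submodule k C |
    IsXSubcomodule k (Coalgebra.comul (R := k) (A := C)) X N}
  have hS : IsXSubcomodule k Coalgebra.comul X S := isXSubcomodule_sSup _ X
  have hstable (φ : Module.Dual k C) : S.map (leftContract φ ∘ₗ Coalgebra.comul) ≤ S :=
    le_sSup (hS.map (comul_comp_leftContract_comul φ))
  refine ⟨fun c hc => ?_, hS.le, fun _ => Submodule.finiteDimensional_of_le hS.le⟩
  refine mem_range_map_of_forall_leftContract_mem ?_ fun φ => hstable φ ⟨c, hc, rfl⟩
  have hc' := hS c hc
  rw [← LinearMap.rTensor_comp_lTensor] at hc'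
  exact LinearMap.range_comp_le_range _ _ hc'

/-- `O(G)_X`, the largest `X`-subcomodule of the right regular comodule `O(G)`,
is a subcoalgebra of `O(G)`, is contained in `X`, and is finite dimensional
whenever `X` is. -/
theorem OGX_subcoalgebra {k C : Type*} [Field k] [CommRing C]
    [HopfAlgebra k C] (X : Submodule k C) (hX : (1 : C) ∈ X) :
    (∀ c ∈ sSup {N : Submodule k C |
        IsXSubcomodule k (Coalgebra.comul (R := k) (A := C)) X N},
      Coalgebra.comul (R := k) c ∈ LinearMap.range (TensorProduct.map
        (sSup {N : Submodule k C |
          IsXSubcomodule k (Coalgebra.comul (R := k) (A := C)) X N}).subtype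
        (sSup {N : Submodule k C |
          IsXSubcomodule k (Coalgebra.comul (R := k) (A := C)) X N}).subtype)) ∧
    sSup {N : Submodule k C |
      IsXSubcomodule k (Coalgebra.comul (R := k) (A := C)) X N} ≤ X ∧
    (FiniteDimensional k ↥X → FiniteDimensional k ↥(sSup {N : Submodule k C |
      IsXSubcomodule k (Coalgebra.comul (R := k) (A := C)) X N})) :=
  OGX_subcoalgebra_general X
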